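/- Let G be a finite group of order p⁵ (p prime) admitting a Kantor family (F, F*) of order (p², p), and suppose |G'| = p where G' is the derived subgroup. Then every member of F ∪ F* is abelian. -/

import Mathlib

open scoped Pointwise

/-- A Kantor family of order `(s,t)` for a group `G`:
families `A i` (of order `s`) and `Astar i` (of order `st`), `i : Fin (t+1)`,
with `A i ≤ Astar i`, the tangency condition `A i ⊓ Astar j = ⊥` for `i ≠ j`,
and the triple condition `A i * A j ∩ A k = 1` for pairwise distinct `i, j, k`. -/
def IsKantorFamily {G : Type*} [Group G] (s t : ℕ)
    (A Astar : Fin (t + 1) → Subgroup G) : Prop :=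
  (∀ i, Nat.card (A i) = s) ∧
  (∀ i, Nat.card (Astar i) = s * t) ∧
  (∀ i, A i ≤ Astar i) ∧
  (∀ i j, i ≠ j → A i ⊓ Astar j = ⊥) ∧
  (∀ i j k, i ≠ j → j ≠ k → i ≠ k →
    ∀ g ∈ (A i : Set G) * (A j : Set G), g ∈ A k → g = 1)

/-!
If some `Astar i` were non-abelian, its derived subgroup would be a non-trivial subgroup of `G'`,
hence equal to `G'` because `|G'| = p`. As `A i` has index `p` in the `p`-group `Astar i`, it
contains `(Astar i)' = G'` and is therefore normal in `G`. But then `A i * A j` is a subgroup of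
order `p⁴` meeting `A k` trivially, so `|G| ≥ p⁶`.
-/

namespace Subgroup

variable {G : Type*} [Group G]

theorem card_mul_relIndex {H K : Subgroup G} (h : H ≤ K) :
    Nat.card H * H.relIndex K = Nat.card K := by
  rw [relIndex, ← card_mul_index (H.subgroupOf K), Nat.card_congr (subgroupOfEquivOfLe h).toEquiv]

theorem card_sup_of_normal_of_inf_eq_bot {N H : Subgroup G} [N.Normal] (h : N ⊓ H = ⊥) :
    Nat.card ↥(N ⊔ H) = Nat.card N * Nat.card H := by
  rw [← card_mul_relIndex le_sup_left, relIndex_sup_left, ← inf_relIndex_right, h,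
    relIndex_bot_left]

theorem card_mul_card_le_of_inf_eq_bot [Finite G] {H K : Subgroup G} (h : H ⊓ K = ⊥) :
    Nat.card H * Nat.card K ≤ Nat.card G := by
  have hindex : Nat.card G ≤ H.index * K.index := by
    simpa only [h, index_bot] using index_inf_le (H := H) (K := K)
  refine Nat.le_of_mul_le_mul_right ?_ (Nat.card_pos (α := G))
  calc Nat.card H * Nat.card K * Nat.card G
      ≤ Nat.card H * Nat.card K * (H.index * K.index) := by gcongr
    _ = Nat.card H * H.index * (Nat.card K * K.index) := by ring
    _ = Nat.card G * Nat.card G := by rw [card_mul_index, card_mul_index]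

theorem eq_of_le_of_ne_bot_of_card_prime {H K : Subgroup G} (hle : H ≤ K) (hH : H ≠ ⊥)
    (hK : (Nat.card K).Prime) : H = K := by
  have : Finite K := Nat.finite_of_card_ne_zero hK.ne_zero
  refine eq_of_le_of_card_ge hle (le_of_eq ?_)
  rcases hK.eq_one_or_self_of_dvd _ (card_dvd_of_le hle) with h1 | h
  · exact absurd (card_eq_one.mp h1) hH
  · exact h.symm

theorem commutator_le_of_index_eq_prime {p : ℕ} [Fact p.Prime] [Finite G] (hG : IsPGroup p G)
    {B : Subgroup G} (hB : B.index = p) : _root_.commutator G ≤ B := by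
  have hp : p.Prime := Fact.out
  obtain ⟨n, hn⟩ := hG.exists_card_eq
  have hn0 : n ≠ 0 := by
    rintro rfl
    have := hB ▸ B.index_dvd_card
    rw [hn, pow_zero, Nat.dvd_one] at this
    exact hp.one_lt.ne' this
  have : B.Normal := normal_of_index_eq_minFac_card <| by rw [hB, hn, hp.pow_minFac hn0]
  have : IsCyclic (G ⧸ B) := isCyclic_of_prime_card hB
  exact Normal.quotient_commutative_iff_commutator_le.mp inferInstance

theorem commutator_self_le_of_relIndex_eq_prime {p : ℕ} [Fact p.Prime] {B H : Subgroup G}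
    [Finite H] (hH : IsPGroup p H) (hB : B.relIndex H = p) : ⁅H, H⁆ ≤ B := by
  rw [← map_subtype_commutator, map_le_iff_le_comap]
  exact commutator_le_of_index_eq_prime hH hB

end Subgroup

namespace IsKantorFamily

open Subgroup

variable {G : Type*} [Group G] {s t : ℕ} {A Astar : Fin (t + 1) → Subgroup G}

theorem pow_three_le_card_of_normal [Finite G] (hKF : IsKantorFamily s t A Astar) (ht : 2 ≤ t)
    (i : Fin (t + 1)) [(A i).Normal] : s ^ 3 ≤ Nat.card G := by
  obtain ⟨hcard, -, hle, htangent, htriple⟩ := hKF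
  obtain ⟨j, hji, -⟩ := Fin.exists_ne_and_ne_of_two_lt i i (by omega)
  obtain ⟨k, hki, hkj⟩ := Fin.exists_ne_and_ne_of_two_lt i j (by omega)
  have hij : A i ⊓ A j = ⊥ := le_bot_iff.mp <| (inf_le_inf_left _ (hle j)).trans_eq
    (htangent i j hji.symm)
  have hijk : (A i ⊔ A j) ⊓ A k = ⊥ := by
    refine le_bot_iff.mp fun g hg => ?_
    obtain ⟨hg, hgk⟩ := mem_inf.mp hg
    rw [← SetLike.mem_coe, normal_mul] at hg
    exact htriple i j k hji.symm hkj.symm hki.symm g hg hgk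
  calc s ^ 3 = Nat.card ↥(A i ⊔ A j) * Nat.card (A k) := by
        rw [card_sup_of_normal_of_inf_eq_bot hij, hcard, hcard, hcard]; ring
    _ ≤ Nat.card G := card_mul_card_le_of_inf_eq_bot hijk

theorem normal_of_not_isMulCommutative [Fact t.Prime] [Finite G]
    (hKF : IsKantorFamily s t A Astar) (hG : IsPGroup t G) (hG' : Nat.card (commutator G) = t)
    {i : Fin (t + 1)} (hi : ¬ IsMulCommutative (Astar i)) : (A i).Normal := by
  obtain ⟨hcard, hcardstar, hle, -, -⟩ := hKF
  have hrel : (A i).relIndex (Astar i) = t := by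
    have h := card_mul_relIndex (hle i)
    rw [hcard, hcardstar] at h
    exact Nat.eq_of_mul_eq_mul_left (hcard i ▸ Nat.card_pos) h
  have hderived : ⁅Astar i, Astar i⁆ = commutator G := by
    refine eq_of_le_of_ne_bot_of_card_prime ?_ (mt commutator_self_eq_bot_iff.mp hi)
      (hG' ▸ Fact.out)
    rw [commutator_def]
    exact commutator_mono le_top le_top
  exact Normal.of_commutator_le G <| hderived.ge.trans <|
    commutator_self_le_of_relIndex_eq_prime (hG.to_subgroup _) hrel

end IsKantorFamily

theorem stmt4 {G : Type*} [Group G] (p : ℕ) (hp : p.Prime)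
    (hG : Nat.card G = p ^ 5)
    (A Astar : Fin (p + 1) → Subgroup G)
    (hKF : IsKantorFamily (p ^ 2) p A Astar)
    (hG' : Nat.card (commutator G) = p) :
    (∀ i, IsMulCommutative (A i)) ∧ (∀ i, IsMulCommutative (Astar i)) := by
  have : Fact p.Prime := ⟨hp⟩
  have : Finite G := Nat.finite_of_card_ne_zero (by rw [hG]; exact pow_ne_zero _ hp.ne_zero)
  refine ⟨fun i => IsPGroup.isMulCommutative_of_card_eq_prime_sq (hKF.1 i), fun i => ?_⟩
  by_contra hi
  have : (A i).Normal := hKF.normal_of_not_isMulCommutative (IsPGroup.of_card hG) hG' hi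
  have hle := hKF.pow_three_le_card_of_normal hp.two_le i
  rw [hG, ← pow_mul] at hle
  exact absurd hle (Nat.pow_lt_pow_right hp.one_lt (by norm_num)).not_ge
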